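/- Let a, b, c, d, g be complex numbers with d and g not nonpositive integers, and let x, y be complex numbers with |x| + |y| < 1. Then the Appell F₂ double series satisfies ∑_{m=0}^∞ ∑_{n=0}^∞ [(a)_{m+n} (b)_m (c)_n / ((d)_m (g)_n m! n!)] x^m y^n = ∑_{n=0}^∞ [(a)_n (c)_n / ((g)_n n!)] y^n · ∑_{m=0}^∞ [(a+n)_m (b)_m / ((d)_m m!)] x^m, where all series converge absolutely. -/

import Mathlib

/-!
Every Pochhammer ratio `(p)_m / (q)_m` grows more slowly than `ρ ^ m` for each `ρ > 1`, since
its successive quotients `(p + m) / (q + m)` tend to `1`. Writing `(a)_{m+n} / (m! n!)` as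
`(a)_{m+n} / (1)_{m+n} · C(m+n, m)`, the `F₂` terms are therefore dominated by a constant times
`C(m+n, m) (ρ²|x|)^m (ρ²|y|)^n`, which is summable as soon as `ρ²(|x| + |y|) < 1`.
The splitting `(a)_{m+n} = (a)_n (a+n)_m` factors each term as the `n`-th outer coefficient
times the `m`-th term of `₂F₁[a+n, b; d; x]`, and summing an absolutely summable double series
by columns gives the identity.
-/

/-- Pochhammer symbol `(q)_n = q (q+1) ⋯ (q+n-1)` for a complex number `q`. -/
noncomputable def cpoch (q : ℂ) (n : ℕ) : ℂ := ∏ i ∈ Finset.range n, (q + i)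

open Finset Filter

theorem exists_le_mul_pow_of_eventually_le_mul {f : ℕ → ℝ} {ρ : ℝ} (hρ : 0 < ρ)
    (h : ∀ᶠ m in atTop, f (m + 1) ≤ ρ * f m) : ∃ C, ∀ m, f m ≤ C * ρ ^ m := by
  obtain ⟨N, hN⟩ := eventually_atTop.1 h
  set C := (range (N + 1)).sup' nonempty_range_add_one fun m => f m / ρ ^ m
  have hsmall : ∀ m ≤ N, f m ≤ C * ρ ^ m := fun m hm => by
    rw [← div_le_iff₀ (pow_pos hρ m)]
    exact le_sup' (fun m => f m / ρ ^ m) (mem_range_succ_iff.2 hm)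
  refine ⟨C, fun m => ?_⟩
  rcases le_total m N with hm | hm
  · exact hsmall m hm
  induction m, hm using Nat.le_induction with
  | base => exact hsmall N le_rfl
  | succ m hNm ih =>
    calc f (m + 1) ≤ ρ * f m := hN m hNm
      _ ≤ ρ * (C * ρ ^ m) := by gcongr
      _ = C * ρ ^ (m + 1) := by ring

theorem exists_one_lt_sq_mul_lt_one {s : ℝ} (hs : s < 1) :
    ∃ ρ : ℝ, 1 < ρ ∧ ρ ^ 2 * s < 1 := by
  have hcont : Tendsto (fun ρ : ℝ => ρ ^ 2 * s) (nhds 1) (nhds s) := by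
    simpa using (by fun_prop : Continuous fun ρ : ℝ => ρ ^ 2 * s).tendsto 1
  have hnear : ∀ᶠ ρ in nhdsWithin 1 (Set.Ioi 1), ρ ^ 2 * s < 1 :=
    (hcont.eventually (gt_mem_nhds hs)).filter_mono nhdsWithin_le_nhds
  exact (eventually_mem_nhdsWithin.and hnear).exists

theorem summable_choose_mul_pow_mul_pow {u v : ℝ} (hu : 0 ≤ u) (hv : 0 ≤ v)
    (huv : u + v < 1) :
    Summable fun mn : ℕ × ℕ => ((mn.1 + mn.2).choose mn.1 : ℝ) * u ^ mn.1 * v ^ mn.2 := by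
  have hv1 : ‖v‖ < 1 := by rw [Real.norm_of_nonneg hv]; linarith
  have hrow : ∀ m : ℕ, HasSum (fun n : ℕ => ((m + n).choose m : ℝ) * u ^ m * v ^ n)
      (u ^ m * (1 / (1 - v) ^ (m + 1))) := fun m => by
    refine ((hasSum_choose_mul_geometric_of_norm_lt_one m hv1).mul_left (u ^ m)).congr_fun
      fun n => ?_
    rw [add_comm m n]
    ring
  refine (summable_prod_of_nonneg fun _ => by dsimp only [Pi.zero_apply]; positivity).2
    ⟨fun m => (hrow m).summable, ?_⟩
  have hratio : u / (1 - v) < 1 := by rw [div_lt_one (by linarith)]; linarith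
  refine ((summable_geometric_of_lt_one (div_nonneg hu (by linarith)) hratio).mul_left
    (1 / (1 - v))).congr fun m => ?_
  rw [(hrow m).tsum_eq]
  generalize 1 - v = w
  ring

theorem eventually_norm_add_natCast_le (p q : ℂ) {ρ : ℝ} (hρ : 1 < ρ) :
    ∀ᶠ m : ℕ in atTop, ‖p + m‖ ≤ ρ * ‖q + m‖ := by
  have hlarge : ∀ᶠ m : ℕ in atTop, ‖p‖ + ρ * ‖q‖ ≤ (ρ - 1) * m :=
    (tendsto_natCast_atTop_atTop.const_mul_atTop (sub_pos.2 hρ)).eventually_ge_atTop _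
  filter_upwards [hlarge] with m hm
  have hp : ‖p + m‖ ≤ ‖p‖ + m := (norm_add_le _ _).trans_eq (by rw [Complex.norm_natCast])
  have hq : (m : ℝ) - ‖q‖ ≤ ‖q + m‖ := by
    have := norm_add_le (q + m) (-q)
    rw [add_neg_cancel_comm, norm_neg, Complex.norm_natCast] at this
    linarith
  nlinarith

theorem cpoch_succ (q : ℂ) (m : ℕ) : cpoch q (m + 1) = cpoch q m * (q + m) :=
  prod_range_succ _ _

theorem cpoch_add (q : ℂ) (n m : ℕ) : cpoch q (n + m) = cpoch q n * cpoch (q + n) m := by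
  simp only [cpoch, prod_range_add, Nat.cast_add, add_assoc]

theorem cpoch_one (m : ℕ) : cpoch 1 m = m.factorial := by
  induction m with
  | zero => simp [cpoch]
  | succ m ih => rw [cpoch_succ, ih, Nat.factorial_succ]; push_cast; ring

theorem exists_norm_cpoch_div_le (p q : ℂ) {ρ : ℝ} (hρ : 1 < ρ) :
    ∃ C, ∀ m, ‖cpoch p m / cpoch q m‖ ≤ C * ρ ^ m := by
  refine exists_le_mul_pow_of_eventually_le_mul (by linarith) ?_
  filter_upwards [eventually_norm_add_natCast_le p q hρ] with m hm
  rw [cpoch_succ, cpoch_succ, mul_div_mul_comm, norm_mul, norm_div (p + m), mul_comm ρ]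
  gcongr
  exact div_le_of_le_mul₀ (norm_nonneg _) (by linarith) hm

noncomputable def gaussTerm (a b d x : ℂ) (m : ℕ) : ℂ :=
  cpoch a m * cpoch b m / (cpoch d m * (m.factorial : ℂ)) * x ^ m

noncomputable def appellF2Term (a b c d g x y : ℂ) (mn : ℕ × ℕ) : ℂ :=
  cpoch a (mn.1 + mn.2) * cpoch b mn.1 * cpoch c mn.2 /
    (cpoch d mn.1 * cpoch g mn.2 * (mn.1.factorial : ℂ) * (mn.2.factorial : ℂ)) *
    x ^ mn.1 * y ^ mn.2

theorem gaussTerm_eq_cpoch_div_mul (a b d x : ℂ) (m : ℕ) :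
    gaussTerm a b d x m = cpoch a m / cpoch 1 m * (cpoch b m / cpoch d m) * x ^ m := by
  rw [gaussTerm, cpoch_one]
  ring

theorem appellF2Term_eq_choose_mul (a b c d g x y : ℂ) (m n : ℕ) :
    appellF2Term a b c d g x y (m, n) =
      ((m + n).choose m : ℂ) * (cpoch a (m + n) / cpoch 1 (m + n)) * (cpoch b m / cpoch d m) *
        (cpoch c n / cpoch g n) * (x ^ m * y ^ n) := by
  have hchoose : ((m + n).choose m : ℂ) ≠ 0 :=
    Nat.cast_ne_zero.2 (Nat.choose_pos (Nat.le_add_right m n)).ne'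
  rw [appellF2Term, cpoch_one, ← Nat.add_choose_mul_factorial_mul_factorial m n,
    ← Nat.choose_symm_add]
  push_cast
  field_simp

theorem appellF2Term_eq_mul (a b c d g x y : ℂ) (m n : ℕ) :
    appellF2Term a b c d g x y (m, n) = gaussTerm a c g y n * gaussTerm (a + n) b d x m := by
  rw [appellF2Term, gaussTerm, gaussTerm, add_comm m n, cpoch_add]
  ring

theorem summable_gaussTerm (a b d : ℂ) {x : ℂ} (hx : ‖x‖ < 1) :
    Summable (gaussTerm a b d x) := by
  obtain ⟨ρ, hρ, hρx⟩ := exists_one_lt_sq_mul_lt_one hx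
  obtain ⟨C₁, hC₁⟩ := exists_norm_cpoch_div_le a 1 hρ
  obtain ⟨C₂, hC₂⟩ := exists_norm_cpoch_div_le b d hρ
  refine Summable.of_norm_bounded
    ((summable_geometric_of_lt_one (by positivity) hρx).mul_left (C₁ * C₂)) fun m => ?_
  have h₁ : 0 ≤ C₁ * ρ ^ m := (norm_nonneg _).trans (hC₁ m)
  calc ‖gaussTerm a b d x m‖
      = ‖cpoch a m / cpoch 1 m‖ * ‖cpoch b m / cpoch d m‖ * ‖x‖ ^ m := by
        rw [gaussTerm_eq_cpoch_div_mul, norm_mul, norm_mul, norm_pow]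
    _ ≤ C₁ * ρ ^ m * (C₂ * ρ ^ m) * ‖x‖ ^ m := by
        gcongr
        exacts [hC₁ m, hC₂ m]
    _ = C₁ * C₂ * (ρ ^ 2 * ‖x‖) ^ m := by ring

theorem summable_appellF2Term (a b c d g : ℂ) {x y : ℂ} (hxy : ‖x‖ + ‖y‖ < 1) :
    Summable (appellF2Term a b c d g x y) := by
  obtain ⟨ρ, hρ, hρxy⟩ := exists_one_lt_sq_mul_lt_one hxy
  obtain ⟨C₁, hC₁⟩ := exists_norm_cpoch_div_le a 1 hρ
  obtain ⟨C₂, hC₂⟩ := exists_norm_cpoch_div_le b d hρ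
  obtain ⟨C₃, hC₃⟩ := exists_norm_cpoch_div_le c g hρ
  have hdom := summable_choose_mul_pow_mul_pow (u := ρ ^ 2 * ‖x‖) (v := ρ ^ 2 * ‖y‖)
    (by positivity) (by positivity) (by linarith)
  refine Summable.of_norm_bounded (hdom.mul_left (C₁ * C₂ * C₃)) fun ⟨m, n⟩ => ?_
  have h₁ : 0 ≤ C₁ * ρ ^ (m + n) := (norm_nonneg _).trans (hC₁ _)
  have h₂ : 0 ≤ C₂ * ρ ^ m := (norm_nonneg _).trans (hC₂ m)
  calc ‖appellF2Term a b c d g x y (m, n)‖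
      = ((m + n).choose m : ℝ) * ‖cpoch a (m + n) / cpoch 1 (m + n)‖ *
          ‖cpoch b m / cpoch d m‖ * ‖cpoch c n / cpoch g n‖ *
          (‖x‖ ^ m * ‖y‖ ^ n) := by
        rw [appellF2Term_eq_choose_mul]
        simp only [norm_mul, norm_pow, Complex.norm_natCast]
    _ ≤ ((m + n).choose m : ℝ) * (C₁ * ρ ^ (m + n)) * (C₂ * ρ ^ m) * (C₃ * ρ ^ n) *
          (‖x‖ ^ m * ‖y‖ ^ n) := by
        gcongr
        exacts [hC₁ _, hC₂ m, hC₃ n]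
    _ = C₁ * C₂ * C₃ *
          (((m + n).choose m : ℝ) * (ρ ^ 2 * ‖x‖) ^ m * (ρ ^ 2 * ‖y‖) ^ n) := by ring

theorem statement6_general (a b c d g x y : ℂ)
    (hxy : ‖x‖ + ‖y‖ < 1) :
    Summable (fun mn : ℕ × ℕ =>
      cpoch a (mn.1 + mn.2) * cpoch b mn.1 * cpoch c mn.2 /
        (cpoch d mn.1 * cpoch g mn.2 * (mn.1.factorial : ℂ) * (mn.2.factorial : ℂ)) *
        x ^ mn.1 * y ^ mn.2) ∧
    (∀ n : ℕ, Summable (fun m : ℕ =>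
      cpoch (a + n) m * cpoch b m / (cpoch d m * (m.factorial : ℂ)) * x ^ m)) ∧
    Summable (fun n : ℕ =>
      cpoch a n * cpoch c n / (cpoch g n * (n.factorial : ℂ)) * y ^ n *
        ∑' m : ℕ, cpoch (a + n) m * cpoch b m / (cpoch d m * (m.factorial : ℂ)) * x ^ m) ∧
    (∑' mn : ℕ × ℕ,
        cpoch a (mn.1 + mn.2) * cpoch b mn.1 * cpoch c mn.2 /
          (cpoch d mn.1 * cpoch g mn.2 * (mn.1.factorial : ℂ) * (mn.2.factorial : ℂ)) *
          x ^ mn.1 * y ^ mn.2)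
      = ∑' n : ℕ, cpoch a n * cpoch c n / (cpoch g n * (n.factorial : ℂ)) * y ^ n *
          ∑' m : ℕ, cpoch (a + n) m * cpoch b m / (cpoch d m * (m.factorial : ℂ)) * x ^ m := by
  show Summable (appellF2Term a b c d g x y) ∧
    (∀ n : ℕ, Summable (gaussTerm (a + n) b d x)) ∧
    Summable (fun n : ℕ => gaussTerm a c g y n * ∑' m, gaussTerm (a + n) b d x m) ∧
    ∑' mn, appellF2Term a b c d g x y mn =
      ∑' n, gaussTerm a c g y n * ∑' m, gaussTerm (a + n) b d x m
  have hx : ‖x‖ < 1 := by linarith [norm_nonneg y]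
  have hF := summable_appellF2Term a b c d g hxy
  have hcolumn : ∀ n : ℕ, ∑' m, appellF2Term a b c d g x y (m, n) =
      gaussTerm a c g y n * ∑' m, gaussTerm (a + n) b d x m := fun n => by
    simp only [appellF2Term_eq_mul, tsum_mul_left]
  refine ⟨hF, fun n => summable_gaussTerm (a + n) b d hx, ?_, ?_⟩
  · exact hF.prod_symm.prod.congr hcolumn
  · have hswap := (Equiv.prodComm ℕ ℕ).tsum_eq (appellF2Term a b c d g x y)
    have hcolumns := hF.prod_symm.tsum_prod
    simp only [Equiv.prodComm_apply, Prod.swap_prod_mk] at hswap hcolumns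
    rw [← hswap, hcolumns]
    exact tsum_congr hcolumn

/-- For complex `a, b, c, d, g` with `d, g` not nonpositive integers and
`|x| + |y| < 1`, the Appell `F₂` double series converges absolutely, as do all the series
on the right, and
`∑_{m,n} (a)_{m+n} (b)_m (c)_n / ((d)_m (g)_n m! n!) x^m y^n
 = ∑_n (a)_n (c)_n / ((g)_n n!) y^n · ∑_m (a+n)_m (b)_m / ((d)_m m!) x^m`. -/
theorem statement6 (a b c d g x y : ℂ)
    (hd : ∀ n : ℕ, d ≠ -(n : ℂ)) (hg : ∀ n : ℕ, g ≠ -(n : ℂ))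
    (hxy : ‖x‖ + ‖y‖ < 1) :
    Summable (fun mn : ℕ × ℕ =>
      cpoch a (mn.1 + mn.2) * cpoch b mn.1 * cpoch c mn.2 /
        (cpoch d mn.1 * cpoch g mn.2 * (mn.1.factorial : ℂ) * (mn.2.factorial : ℂ)) *
        x ^ mn.1 * y ^ mn.2) ∧
    (∀ n : ℕ, Summable (fun m : ℕ =>
      cpoch (a + n) m * cpoch b m / (cpoch d m * (m.factorial : ℂ)) * x ^ m)) ∧
    Summable (fun n : ℕ =>
      cpoch a n * cpoch c n / (cpoch g n * (n.factorial : ℂ)) * y ^ n *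
        ∑' m : ℕ, cpoch (a + n) m * cpoch b m / (cpoch d m * (m.factorial : ℂ)) * x ^ m) ∧
    (∑' mn : ℕ × ℕ,
        cpoch a (mn.1 + mn.2) * cpoch b mn.1 * cpoch c mn.2 /
          (cpoch d mn.1 * cpoch g mn.2 * (mn.1.factorial : ℂ) * (mn.2.factorial : ℂ)) *
          x ^ mn.1 * y ^ mn.2)
      = ∑' n : ℕ, cpoch a n * cpoch c n / (cpoch g n * (n.factorial : ℂ)) * y ^ n *
          ∑' m : ℕ, cpoch (a + n) m * cpoch b m / (cpoch d m * (m.factorial : ℂ)) * x ^ m :=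
  statement6_general a b c d g x y hxy
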